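/- For every real t with 0 < t < 2, with Y_{1,s} := Ỹ_s/Y_s: (i) Y₁(t)·Z₁(t)⁴·Y_{1,1}(t)^{−1/2} = W₁(t)⁴·X₁(t)^{−4}; (ii) Y₂(t)²·Z₂(t)⁴·Y_{1,2}(t)^{−1} = W₂(t)⁸·X₂(t)^{−4}; (iii) Y₃(t)³·Z₃(t)⁴·Y_{1,3}(t)^{−3/2} = W₃(t)¹²·X₃(t)^{−4}. (All fractional powers are real powers of positive real numbers; these are the instances s = 1, 2, 3 of Y_s^s·Z_s⁴·Y_{1,s}^{−s/2} = W_s^{4s}·X_s^{−4}.) -/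

import Mathlib

/-! Göttsche–Kool universal functions of a real variable `t`, with all square
roots the nonnegative real square roots.  The `t`-suffixed versions
(`gkYt`, `gkZt`, `gkSt`) are the sign-flipped functions obtained by
replacing `√t` with `−√t`. -/

noncomputable def gkY1 (t : ℝ) : ℝ := (1 + t) + Real.sqrt t * Real.sqrt (1 + 3*t/4)
noncomputable def gkYt1 (t : ℝ) : ℝ := (1 + t) - Real.sqrt t * Real.sqrt (1 + 3*t/4)
noncomputable def gkY2 (t : ℝ) : ℝ := Real.sqrt t + Real.sqrt (1 + t)
noncomputable def gkYt2 (t : ℝ) : ℝ := -Real.sqrt t + Real.sqrt (1 + t)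
noncomputable def gkY3 (t : ℝ) : ℝ := 1 + Real.sqrt t * Real.sqrt (1 - t/4)
noncomputable def gkYt3 (t : ℝ) : ℝ := 1 - Real.sqrt t * Real.sqrt (1 - t/4)
noncomputable def gkZ1 (t : ℝ) : ℝ :=
  (1 + 3*t/4 - (1/2) * Real.sqrt t * Real.sqrt (1 + 3*t/4)) / (1 + t/2)
noncomputable def gkZt1 (t : ℝ) : ℝ :=
  (1 + 3*t/4 + (1/2) * Real.sqrt t * Real.sqrt (1 + 3*t/4)) / (1 + t/2)
noncomputable def gkZ2 (t : ℝ) : ℝ := 1 + t - Real.sqrt t * Real.sqrt (1 + t)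
noncomputable def gkZt2 (t : ℝ) : ℝ := 1 + t + Real.sqrt t * Real.sqrt (1 + t)
noncomputable def gkZ3 (t : ℝ) : ℝ :=
  (1 + t/2) * ((1 - t/4)*(1 + t/2)
    - (3/2) * Real.sqrt t * Real.sqrt (1 - t/4) * (1 - t/6)) / (1 - t/2)^3
noncomputable def gkZt3 (t : ℝ) : ℝ :=
  (1 + t/2) * ((1 - t/4)*(1 + t/2)
    + (3/2) * Real.sqrt t * Real.sqrt (1 - t/4) * (1 - t/6)) / (1 - t/2)^3
noncomputable def gkS1 (t : ℝ) : ℝ := -t/2 + Real.sqrt t * Real.sqrt (1 + 3*t/4)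
noncomputable def gkSt1 (t : ℝ) : ℝ := -t/2 - Real.sqrt t * Real.sqrt (1 + 3*t/4)
noncomputable def gkS2 (t : ℝ) : ℝ := -t + Real.sqrt t * Real.sqrt (1 + t)
noncomputable def gkSt2 (t : ℝ) : ℝ := -t - Real.sqrt t * Real.sqrt (1 + t)
noncomputable def gkS3 (t : ℝ) : ℝ :=
  (-(3/2)*t*(1 - t/6) + Real.sqrt t * Real.sqrt (1 - t/4) * (1 + t/2)) / (1 - t/2)
noncomputable def gkSt3 (t : ℝ) : ℝ :=
  (-(3/2)*t*(1 - t/6) - Real.sqrt t * Real.sqrt (1 - t/4) * (1 + t/2)) / (1 - t/2)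
noncomputable def gkV2 (t : ℝ) : ℝ := (1 + t)^2
noncomputable def gkV3 (t : ℝ) : ℝ := (1 + t/2)^3 / (1 - t/2)
noncomputable def gkW1 (t : ℝ) : ℝ := (1 + t/2)⁻¹
noncomputable def gkW2 (t : ℝ) : ℝ := (Real.sqrt (1 + t))⁻¹
noncomputable def gkW3 (t : ℝ) : ℝ := 2 / (2 + t)
noncomputable def gkX1 (t : ℝ) : ℝ :=
  (1 + t/2) ^ (-(3:ℝ)/4) * (1 + 3*t/4) ^ (-(1:ℝ)/2)
noncomputable def gkX2 (t : ℝ) : ℝ := (1 + t) ^ (-(3:ℝ)/2)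
noncomputable def gkX3 (t : ℝ) : ℝ :=
  (1 - t/2) ^ ((3:ℝ)/4) * (1 - t/4) ^ (-(1:ℝ)/2) * (1 + t/2) ^ (-(4:ℝ))

/-! With `a = √t` and `b` the other square root occurring in `Y_s`, the relation between `a²` and
`b²` makes `Y_s = (b + a/2)²` and `Ỹ_s = (b - a/2)²` for `s = 1, 3` (and `Y₂ Ỹ₂ = 1`), with
`(b + a/2)(b - a/2)` equal to `1 ± t/2`. Hence the fractional powers of `Ỹ_s/Y_s` and of the
factors of `X_s⁴` are integer powers of `b`, `b ± a/2` and `1 ± t/2`, and each identity becomes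
a rational identity in these quantities. -/

lemma sq_rpow_neg_natCast_div_two {x : ℝ} (hx : 0 ≤ x) (n : ℕ) :
    (x ^ 2) ^ (-(n : ℝ) / 2) = (x ^ n)⁻¹ := by
  rw [← Real.rpow_natCast x 2, ← Real.rpow_mul hx, Nat.cast_ofNat,
    show (2 : ℝ) * (-(n : ℝ) / 2) = -n by ring, Real.rpow_neg hx, Real.rpow_natCast]

lemma rpow_pow_eq_zpow {x p : ℝ} (hx : 0 ≤ x) {m : ℕ} {n : ℤ} (h : p * m = n) :
    (x ^ p) ^ m = x ^ n := by
  rw [← Real.rpow_mul_natCast hx, h, Real.rpow_intCast]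

lemma gkY1_mul_rpow {t : ℝ} (ht : 0 ≤ t) :
    gkY1 t * gkZ1 t ^ 4 * (gkYt1 t / gkY1 t) ^ (-(1:ℝ)/2) = gkW1 t ^ 4 / gkX1 t ^ 4 := by
  set a := √t
  set b := √(1 + 3*t/4)
  have ha : a ^ 2 = t := Real.sq_sqrt ht
  have hb : b ^ 2 = 1 + 3*t/4 := Real.sq_sqrt (by positivity)
  have hu : 0 < b + a/2 := by positivity
  have hv : 0 < b - a/2 := by nlinarith [Real.sqrt_nonneg t]
  have huv : 1 + t/2 = (b + a/2) * (b - a/2) := by linear_combination -hb + ha/4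
  have hY : gkY1 t = (b + a/2) ^ 2 := by rw [gkY1]; linear_combination -hb - ha/4
  have hYt : gkYt1 t = (b - a/2) ^ 2 := by rw [gkYt1]; linear_combination -hb - ha/4
  have hZ : gkZ1 t = b / (b + a/2) := by
    rw [gkZ1, huv, div_eq_div_iff (by positivity) hu.ne']
    linear_combination -(b + a/2) * hb
  have hW : gkW1 t = ((b + a/2) * (b - a/2))⁻¹ := by rw [gkW1, huv]
  have hX : gkX1 t ^ 4 = (((b + a/2) * (b - a/2)) ^ 3 * b ^ 4)⁻¹ := by
    rw [gkX1, mul_pow, rpow_pow_eq_zpow (by positivity) (n := -3) (by norm_num),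
      rpow_pow_eq_zpow (by positivity) (n := -2) (by norm_num), ← hb, huv]
    simp only [zpow_neg, mul_inv]; norm_cast; ring
  rw [hY, hYt, hZ, hW, hX, ← div_pow, show (-(1:ℝ)/2) = -((1:ℕ):ℝ)/2 by norm_num,
    sq_rpow_neg_natCast_div_two (by positivity)]
  field_simp

lemma gkY2_mul_inv {t : ℝ} (ht : 0 ≤ t) :
    gkY2 t ^ 2 * gkZ2 t ^ 4 * (gkYt2 t / gkY2 t)⁻¹ = gkW2 t ^ 8 / gkX2 t ^ 4 := by
  set a := √t
  set b := √(1 + t)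
  have ha : a ^ 2 = t := Real.sq_sqrt ht
  have hb : b ^ 2 = 1 + t := Real.sq_sqrt (by positivity)
  have hb0 : 0 < b := Real.sqrt_pos.2 (by positivity)
  have hv : 0 < b - a := by nlinarith [Real.sqrt_nonneg t]
  have huv : (a + b) * (b - a) = 1 := by linear_combination hb - ha
  have hZ : gkZ2 t = b * (b - a) := by rw [gkZ2]; linear_combination -hb
  have hX : gkX2 t = (b ^ 3)⁻¹ := by
    rw [gkX2, ← hb, show (-(3:ℝ)/2) = -((3:ℕ):ℝ)/2 by norm_num,
      sq_rpow_neg_natCast_div_two hb0.le]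
  have hYt : gkYt2 t = b - a := neg_add_eq_sub a b
  calc gkY2 t ^ 2 * gkZ2 t ^ 4 * (gkYt2 t / gkY2 t)⁻¹ = b ^ 4 * ((a + b) * (b - a)) ^ 3 := by
        rw [hYt, hZ, show gkY2 t = a + b from rfl]; field_simp
    _ = b⁻¹ ^ 8 / (b ^ 3)⁻¹ ^ 4 := by rw [huv]; field_simp
    _ = gkW2 t ^ 8 / gkX2 t ^ 4 := by rw [hX, gkW2]

lemma gkY3_pow_mul_rpow {t : ℝ} (ht0 : 0 ≤ t) (ht2 : t < 2) :
    gkY3 t ^ 3 * gkZ3 t ^ 4 * (gkYt3 t / gkY3 t) ^ (-(3:ℝ)/2)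
      = gkW3 t ^ 12 / gkX3 t ^ 4 := by
  set a := √t
  set b := √(1 - t/4)
  have ha : a ^ 2 = t := Real.sq_sqrt ht0
  have hb : b ^ 2 = 1 - t/4 := Real.sq_sqrt (by linarith)
  have hb0 : 0 < b := Real.sqrt_pos.2 (by linarith)
  have hu : 0 < b + a/2 := by positivity
  have hv : 0 < b - a/2 := by nlinarith [Real.sqrt_nonneg t]
  have huv : 1 - t/2 = (b + a/2) * (b - a/2) := by linear_combination -hb + ha/4
  have hY : gkY3 t = (b + a/2) ^ 2 := by rw [gkY3]; linear_combination -hb - ha/4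
  have hYt : gkYt3 t = (b - a/2) ^ 2 := by rw [gkYt3]; linear_combination -hb - ha/4
  have hN : (1 - t/4) * (1 + t/2) - 3/2 * a * b * (1 - t/6) = b * (b - a/2) ^ 3 := by
    linear_combination (-(b^2 + 1 - t/4) - 3/4*a^2 + 3/2*a*b) * hb
      + (-3/4*(1 - t/4) + a*b/8) * ha
  have hZ : gkZ3 t = (1 + t/2) * b / (b + a/2) ^ 3 := by
    rw [gkZ3, huv, div_eq_div_iff (by positivity) (by positivity)]
    linear_combination (1 + t/2) * (b + a/2) ^ 3 * hN
  have hW : gkW3 t = (1 + t/2)⁻¹ := by rw [gkW3]; field_simp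
  have hX : gkX3 t ^ 4 = ((b + a/2) * (b - a/2)) ^ 3 * (b ^ 4)⁻¹ * ((1 + t/2) ^ 16)⁻¹ := by
    rw [gkX3, mul_pow, mul_pow, rpow_pow_eq_zpow (by linarith) (n := 3) (by norm_num),
      rpow_pow_eq_zpow (by linarith) (n := -2) (by norm_num),
      rpow_pow_eq_zpow (by positivity) (n := -16) (by norm_num), ← hb, huv]
    simp only [zpow_neg]; norm_cast; ring
  rw [hY, hYt, hZ, hW, hX, ← div_pow, show (-(3:ℝ)/2) = -((3:ℕ):ℝ)/2 by norm_num,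
    sq_rpow_neg_natCast_div_two (by positivity)]
  field_simp

/-- for `0 < t < 2`, with `Y_{1,s} = Ỹ_s/Y_s`, the identity
`Y_s^s Z_s⁴ Y_{1,s}^{−s/2} = W_s^{4s} X_s^{−4}` holds for `s = 1, 2, 3`
(all fractional powers being real powers of positive reals). -/
theorem stmt_15 (t : ℝ) (ht0 : 0 < t) (ht2 : t < 2) :
    gkY1 t * gkZ1 t ^ 4 * (gkYt1 t / gkY1 t) ^ (-(1:ℝ)/2)
      = gkW1 t ^ 4 / gkX1 t ^ 4 ∧
    gkY2 t ^ 2 * gkZ2 t ^ 4 * (gkYt2 t / gkY2 t)⁻¹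
      = gkW2 t ^ 8 / gkX2 t ^ 4 ∧
    gkY3 t ^ 3 * gkZ3 t ^ 4 * (gkYt3 t / gkY3 t) ^ (-(3:ℝ)/2)
      = gkW3 t ^ 12 / gkX3 t ^ 4 :=
  ⟨gkY1_mul_rpow ht0.le, gkY2_mul_inv ht0.le, gkY3_pow_mul_rpow ht0.le ht2⟩
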